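/- arXiv:2302.03161 — 4 statements merged into one kernel-verified Lean document; each statement's English description precedes it below -/
import Mathlib

section
/- Let N ≥ 2 and d ≥ 1, and let Θ = [θ_1, …, θ_N] ∈ ℝ^{d×N} and G = [g_1, …, g_N] ∈ ℝ^{d×N}. Suppose the N×N matrix GᵀG ∘ L is invertible. Then the vector η* := −(GᵀG ∘ L)⁻¹ (GᵀΘ ∘ L) 𝟙 is a global minimizer of Ψ, i.e. Ψ(η*) ≤ Ψ(η) for every η ∈ ℝ^N. -/
open Matrix

/-- The Laplacian of the complete graph on `N` vertices: `L = N·I − 𝟙𝟙ᵀ`. -/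
noncomputable def ggL (N : ℕ) : Matrix (Fin N) (Fin N) ℝ :=
  (N : ℝ) • (1 : Matrix (Fin N) (Fin N) ℝ) - Matrix.of fun _ _ => (1 : ℝ)

/-- `Ψ(η) = Σᵢ ‖θ̃ᵢ − (1/N) Σⱼ θ̃ⱼ‖²` where `θ̃ᵢ = θᵢ + ηᵢ gᵢ`, and the columns of
`Θ` (resp. `G`) are the `θᵢ` (resp. `gᵢ`).  Here `‖·‖` is the Euclidean norm on `ℝ^d`. -/
noncomputable def Psi {d N : ℕ} (Θ G : Matrix (Fin d) (Fin N) ℝ) (η : Fin N → ℝ) : ℝ :=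
  ∑ i : Fin N, ∑ k : Fin d,
    ((Θ k i + η i * G k i) - (1 / (N : ℝ)) * ∑ j : Fin N, (Θ k j + η j * G k j)) ^ 2

/-!
Ψ is a sum over coordinates of the quadratic form `y ↦ Σᵢ (yᵢ − ȳ)²`, whose polarization is
`(x, v) ↦ Σᵢ (xᵢ − x̄) vᵢ` because deviations from the mean sum to zero.  Expanding Ψ at `η + δ`
therefore gives `Ψ(η)`, a cross term linear in `δ` and a nonnegative remainder; the cross term is
`(2/N) δᵀ ((GᵀG ∘ L) η + (GᵀΘ ∘ L) 𝟙)`, which vanishes at `η*` by its definition.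
-/

section Deviation

variable {ι : Type*} [Fintype ι]

noncomputable def deviation (y : ι → ℝ) (i : ι) : ℝ :=
  y i - 1 / (Fintype.card ι : ℝ) * ∑ j, y j

theorem sum_deviation (y : ι → ℝ) : ∑ i, deviation y i = 0 := by
  rcases isEmpty_or_nonempty ι with hι | hι
  · simp
  · simp only [deviation, Finset.sum_sub_distrib, Finset.sum_const, Finset.card_univ,
      nsmul_eq_mul]
    field_simp
    ring

theorem deviation_add (x v : ι → ℝ) : deviation (x + v) = deviation x + deviation v := by
  ext i
  simp only [deviation, Pi.add_apply, Finset.sum_add_distrib]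
  ring

theorem sum_deviation_mul_deviation (x v : ι → ℝ) :
    ∑ i, deviation x i * deviation v i = ∑ i, deviation x i * v i := by
  have hv : ∀ i, deviation v i = v i - 1 / (Fintype.card ι : ℝ) * ∑ j, v j := fun _ => rfl
  simp_rw [hv, mul_sub, Finset.sum_sub_distrib, ← Finset.sum_mul, sum_deviation, zero_mul,
    sub_zero]

theorem sum_sq_deviation_add (x v : ι → ℝ) :
    ∑ i, deviation (x + v) i ^ 2 =
      ∑ i, deviation x i ^ 2 + 2 * ∑ i, deviation x i * v i + ∑ i, deviation v i ^ 2 := by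
  rw [← sum_deviation_mul_deviation, Finset.mul_sum, ← Finset.sum_add_distrib,
    ← Finset.sum_add_distrib, deviation_add]
  exact Finset.sum_congr rfl fun i _ => by simp only [Pi.add_apply]; ring

end Deviation

theorem ggL_mulVec {N : ℕ} (y : Fin N → ℝ) : ggL N *ᵥ y = (N : ℝ) • deviation y := by
  ext i
  have hN : (N : ℝ) ≠ 0 := by exact_mod_cast (Fin.pos i).ne'
  rw [ggL, sub_mulVec, smul_mulVec, one_mulVec]
  simp only [Pi.sub_apply, Pi.smul_apply, smul_eq_mul, mulVec, dotProduct, of_apply, one_mul,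
    deviation, Fintype.card_fin]
  field_simp

theorem Matrix.hadamard_transpose_mul_mulVec {κ ι R : Type*} [Fintype κ] [Fintype ι]
    [CommSemiring R] (A B : Matrix κ ι R) (M : Matrix ι ι R) (v : ι → R) :
    ((Aᵀ * B) ⊙ M) *ᵥ v = fun i => ∑ k, A k i * (M *ᵥ fun j => B k j * v j) i := by
  ext i
  simp only [mulVec, dotProduct, hadamard_apply, mul_apply, transpose_apply, Finset.mul_sum,
    Finset.sum_mul]
  rw [Finset.sum_comm]
  exact Finset.sum_congr rfl fun _ _ => Finset.sum_congr rfl fun _ _ => by ring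

section Psi

variable {d N : ℕ} (Θ G : Matrix (Fin d) (Fin N) ℝ)

def thetaTilde (η : Fin N → ℝ) : Matrix (Fin d) (Fin N) ℝ :=
  of fun k i => Θ k i + η i * G k i

theorem thetaTilde_add (η δ : Fin N → ℝ) (k : Fin d) :
    thetaTilde Θ G (η + δ) k = thetaTilde Θ G η k + fun i => δ i * G k i := by
  ext i
  simp only [thetaTilde, of_apply, Pi.add_apply]
  ring

theorem Psi_eq_sum_sq_deviation (η : Fin N → ℝ) :
    Psi Θ G η = ∑ k, ∑ i, deviation (thetaTilde Θ G η k) i ^ 2 := by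
  rw [Psi, Finset.sum_comm]
  simp [thetaTilde, deviation]

theorem Psi_add (η δ : Fin N → ℝ) :
    Psi Θ G (η + δ) = Psi Θ G η + 2 * ∑ i, δ i * ∑ k, G k i * deviation (thetaTilde Θ G η k) i
      + ∑ k, ∑ i, deviation (fun i => δ i * G k i) i ^ 2 := by
  simp only [Psi_eq_sum_sq_deviation, thetaTilde_add, sum_sq_deviation_add,
    Finset.sum_add_distrib, ← Finset.mul_sum]
  congr 3
  rw [Finset.sum_comm]
  simp only [Finset.mul_sum]
  exact Finset.sum_congr rfl fun i _ => Finset.sum_congr rfl fun k _ => by ring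

theorem Psi_le_of_forall_sum_mul_deviation_eq_zero {η : Fin N → ℝ}
    (hη : ∀ i, ∑ k, G k i * deviation (thetaTilde Θ G η k) i = 0) (η' : Fin N → ℝ) :
    Psi Θ G η ≤ Psi Θ G η' := by
  have hsplit := Psi_add Θ G η (η' - η)
  rw [add_sub_cancel] at hsplit
  simp only [hη, mul_zero, Finset.sum_const_zero, add_zero] at hsplit
  rw [hsplit]
  exact le_add_of_nonneg_right (by positivity)

theorem hadamard_ggL_mulVec_add_eq_smul (η : Fin N → ℝ) :
    ((Gᵀ * G) ⊙ ggL N) *ᵥ η + ((Gᵀ * Θ) ⊙ ggL N) *ᵥ (fun _ => 1) =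
      (N : ℝ) • fun i => ∑ k, G k i * deviation (thetaTilde Θ G η k) i := by
  have hrow : ∀ k, ((fun j => G k j * η j) + fun j => Θ k j * 1) = thetaTilde Θ G η k := by
    intro k
    ext j
    simp only [thetaTilde, of_apply, Pi.add_apply]
    ring
  ext i
  rw [hadamard_transpose_mul_mulVec, hadamard_transpose_mul_mulVec, Pi.add_apply,
    ← Finset.sum_add_distrib, Pi.smul_apply, smul_eq_mul, Finset.mul_sum]
  refine Finset.sum_congr rfl fun k _ => ?_
  rw [← mul_add, ← Pi.add_apply, ← mulVec_add, hrow, ggL_mulVec, Pi.smul_apply, smul_eq_mul]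
  ring

end Psi

theorem gg_eta_star_is_global_minimizer_general {d N : ℕ}
    (Θ G : Matrix (Fin d) (Fin N) ℝ)
    (hinv : IsUnit ((Gᵀ * G) ⊙ ggL N)) :
    ∀ η : Fin N → ℝ,
      Psi Θ G ((-(((Gᵀ * G) ⊙ ggL N)⁻¹ * ((Gᵀ * Θ) ⊙ ggL N))) *ᵥ fun _ => (1 : ℝ)) ≤
        Psi Θ G η := by
  set ηstar := (-(((Gᵀ * G) ⊙ ggL N)⁻¹ * ((Gᵀ * Θ) ⊙ ggL N))) *ᵥ fun _ => (1 : ℝ)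
  have hnormal : ((Gᵀ * G) ⊙ ggL N) *ᵥ ηstar + ((Gᵀ * Θ) ⊙ ggL N) *ᵥ (fun _ => 1) = 0 := by
    rw [mulVec_mulVec, mul_neg, ← Matrix.mul_assoc,
      mul_nonsing_inv _ ((isUnit_iff_isUnit_det _).mp hinv), Matrix.one_mul, neg_mulVec,
      neg_add_cancel]
  refine Psi_le_of_forall_sum_mul_deviation_eq_zero Θ G fun i => ?_
  have hN : (N : ℝ) ≠ 0 := by exact_mod_cast (Fin.pos i).ne'
  rw [hadamard_ggL_mulVec_add_eq_smul] at hnormal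
  exact congrFun ((smul_eq_zero.mp hnormal).resolve_left hN) i

/-- If `GᵀG ∘ L` is invertible, then `η* = −(GᵀG ∘ L)⁻¹ (GᵀΘ ∘ L) 𝟙` is a global
minimizer of `Ψ`. -/
theorem gg_eta_star_is_global_minimizer {d N : ℕ} (hN : 2 ≤ N) (hd : 1 ≤ d)
    (Θ G : Matrix (Fin d) (Fin N) ℝ)
    (hinv : IsUnit ((Gᵀ * G) ⊙ ggL N)) :
    ∀ η : Fin N → ℝ,
      Psi Θ G ((-(((Gᵀ * G) ⊙ ggL N)⁻¹ * ((Gᵀ * Θ) ⊙ ggL N))) *ᵥ fun _ => (1 : ℝ)) ≤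
        Psi Θ G η :=
  gg_eta_star_is_global_minimizer_general Θ G hinv
end

section
/- Let N ≥ 2, d ≥ 1, c ≠ 0, and let Θ ∈ ℝ^{d×N}. Set G := cΘ (the gradients of f(θ) = (c/2)θᵀθ at the columns of Θ). If the matrix ΘᵀΘ ∘ L is invertible, then GᵀG ∘ L is invertible and the Gradient Grouping step-size vector satisfies −(GᵀG ∘ L)⁻¹ (GᵀΘ ∘ L) 𝟙 = −(1/c)·𝟙. -/
open Matrix

/-- For `G = cΘ` (gradients of `f(θ) = (c/2)θᵀθ`) with `c ≠ 0`, if `ΘᵀΘ ∘ L` is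
invertible then so is `GᵀG ∘ L`, and the Gradient Grouping step-size vector is
`η* = −(GᵀG ∘ L)⁻¹ (GᵀΘ ∘ L) 𝟙 = −(1/c)·𝟙`. -/
theorem gg_eta_star_isotropic {d N : ℕ} (hN : 2 ≤ N) (hd : 1 ≤ d) (c : ℝ) (hc : c ≠ 0)
    (Θ : Matrix (Fin d) (Fin N) ℝ) (G : Matrix (Fin d) (Fin N) ℝ) (hG : G = c • Θ)
    (hinv : IsUnit ((Θᵀ * Θ) ⊙ ggL N)) :
    IsUnit ((Gᵀ * G) ⊙ ggL N) ∧
      ((-(((Gᵀ * G) ⊙ ggL N)⁻¹ * ((Gᵀ * Θ) ⊙ ggL N))) *ᵥ fun _ => (1 : ℝ)) =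
        (-(1 / c)) • fun _ => (1 : ℝ) := by
  set A := (Θᵀ * Θ) ⊙ ggL N with hA
  have h1 : (Gᵀ * G) ⊙ ggL N = (c * c) • A := by
    subst hG
    ext i j
    simp [hA, hadamard, Matrix.smul_mul, Matrix.mul_smul, mul_assoc]
  have h2 : (Gᵀ * Θ) ⊙ ggL N = c • A := by
    subst hG
    ext i j
    simp [hA, hadamard, Matrix.smul_mul, mul_assoc]
  have hcc : c * c ≠ 0 := mul_ne_zero hc hc
  have hunit : IsUnit ((c*c) • A) := by
    rcases hinv with ⟨u, hu⟩
    exact ⟨(Units.mk0 (c*c) hcc) • u, by simp [hu, Units.smul_def]⟩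
  constructor
  · rw [h1]; exact hunit
  · have hdet : IsUnit A.det := (Matrix.isUnit_iff_isUnit_det A).mp hinv
    have hinvsmul : ((c*c) • A)⁻¹ = (Units.mk0 (c*c) hcc)⁻¹ • A⁻¹ := by
      have := A.inv_smul' (Units.mk0 (c*c) hcc) hdet
      exact this
    rw [h1, h2, hinvsmul]
    have hAinv : A⁻¹ * A = 1 := Matrix.nonsing_inv_mul A hdet
    have : -((Units.mk0 (c*c) hcc)⁻¹ • A⁻¹ * c • A) = (-(1/c)) • (1 : Matrix (Fin N) (Fin N) ℝ) := by
      rw [Matrix.smul_mul, Matrix.mul_smul, hAinv]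
      ext i j
      simp [Units.smul_def]
      field_simp
    rw [this]
    ext i
    simp [Matrix.neg_mulVec, Matrix.smul_mulVec, Matrix.one_mulVec]
end

section
/- One-step convergence for isotropic quadratics: let N ≥ 2, d ≥ 1, c > 0, let f(θ) := (1/2)θᵀ(cI_d)θ, let Θ ∈ ℝ^{d×N}, and let G := cΘ be the matrix of gradients of f at the columns of Θ. If ΘᵀΘ ∘ L is invertible, then the Gradient Grouping update yields Θ + G·diag(η*) = 0, i.e. after a single update every one of the N parameter vectors equals the unique minimizer 0 of f. -/
open Matrix

/-!
For `G = cΘ` both Gram–Hadamard matrices in `η*` are multiples of `P := GᵀΘ ∘ L`, namely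
`GᵀG ∘ L = c • P`, so `η* = −(c • P)⁻¹ P 𝟙 = −c⁻¹ 𝟙` for every weight matrix `L`.
The update then rescales each column `θᵢ` by `1 + c · (−c⁻¹) = 0`.
-/

namespace Matrix

variable {m n K : Type*} [Fintype n] [DecidableEq n] [Field K]

theorem inv_smul_of_ne_zero {c : K} (hc : c ≠ 0) {P : Matrix n n K} (hP : IsUnit P) :
    (c • P)⁻¹ = c⁻¹ • P⁻¹ :=
  inv_eq_left_inv <| by
    rw [smul_mul, Matrix.mul_smul, smul_smul, inv_mul_cancel₀ hc, one_smul,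
      nonsing_inv_mul P ((isUnit_iff_isUnit_det P).mp hP)]

theorem add_smul_mul_diagonal_neg_inv {c : K} (hc : c ≠ 0) (Θ : Matrix m n K) :
    Θ + (c • Θ) * diagonal (fun _ : n => -c⁻¹) = 0 := by
  rw [← Matrix.smul_one_eq_diagonal, Matrix.mul_smul, Matrix.mul_one, smul_smul, neg_mul,
    inv_mul_cancel₀ hc, neg_one_smul, add_neg_cancel]

variable [Fintype m]

noncomputable def ggStepSize (L : Matrix n n K) (Θ G : Matrix m n K) : n → K :=
  -(((Gᵀ * G) ⊙ L)⁻¹ * ((Gᵀ * Θ) ⊙ L)) *ᵥ fun _ => 1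

theorem ggStepSize_smul_self {c : K} (hc : c ≠ 0) (L : Matrix n n K) {Θ : Matrix m n K}
    (hΘ : IsUnit ((Θᵀ * Θ) ⊙ L)) : ggStepSize L Θ (c • Θ) = fun _ => -c⁻¹ := by
  have hgram : ((c • Θ)ᵀ * (c • Θ)) ⊙ L = c • (((c • Θ)ᵀ * Θ) ⊙ L) := by
    rw [Matrix.mul_smul, smul_hadamard]
  have hP : IsUnit (((c • Θ)ᵀ * Θ) ⊙ L) := by
    rw [transpose_smul, smul_mul, smul_hadamard, ← Units.smul_mk0 hc]
    exact hΘ.smul _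
  rw [ggStepSize, hgram, inv_smul_of_ne_zero hc hP, smul_mul,
    nonsing_inv_mul _ ((isUnit_iff_isUnit_det _).mp hP)]
  ext i
  simp [neg_mulVec, smul_mulVec]

end Matrix

theorem gg_one_step_convergence_isotropic_general {d N : ℕ}
    (c : ℝ) (hc : 0 < c)
    (Θ : Matrix (Fin d) (Fin N) ℝ) (G : Matrix (Fin d) (Fin N) ℝ) (hG : G = c • Θ)
    (hinv : IsUnit ((Θᵀ * Θ) ⊙ ggL N)) :
    Θ + G * Matrix.diagonal
        ((-(((Gᵀ * G) ⊙ ggL N)⁻¹ * ((Gᵀ * Θ) ⊙ ggL N))) *ᵥ fun _ => (1 : ℝ)) = 0 := by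
  have hη := ggStepSize_smul_self hc.ne' (ggL N) hinv
  rw [ggStepSize] at hη
  rw [hG, hη]
  exact add_smul_mul_diagonal_neg_inv hc.ne' Θ

/-- One-step convergence for isotropic quadratics `f(θ) = (1/2)θᵀ(cI)θ`, `c > 0`:
with `G = cΘ` the matrix of gradients at the columns of `Θ`, if `ΘᵀΘ ∘ L` is
invertible then the Gradient Grouping update `Θ + G·diag(η*)`, with
`η* = −(GᵀG ∘ L)⁻¹ (GᵀΘ ∘ L)𝟙`, sends every parameter vector to the minimizer `0`. -/
theorem gg_one_step_convergence_isotropic {d N : ℕ} (hN : 2 ≤ N) (hd : 1 ≤ d)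
    (c : ℝ) (hc : 0 < c)
    (Θ : Matrix (Fin d) (Fin N) ℝ) (G : Matrix (Fin d) (Fin N) ℝ) (hG : G = c • Θ)
    (hinv : IsUnit ((Θᵀ * Θ) ⊙ ggL N)) :
    Θ + G * Matrix.diagonal
        ((-(((Gᵀ * G) ⊙ ggL N)⁻¹ * ((Gᵀ * Θ) ⊙ ggL N))) *ᵥ fun _ => (1 : ℝ)) = 0 :=
  gg_one_step_convergence_isotropic_general c hc Θ G hG hinv
end

section
/- Let A ∈ ℝ^{d×d} be symmetric positive definite with smallest eigenvalue λ_min > 0 and largest eigenvalue λ_max, and let ρ := λ_max/λ_min. Then for every θ ∈ ℝ^d, ‖(θᵀA²θ)·θ − (θᵀAθ)·Aθ‖ ≤ (ρ − 1)·(θᵀA²θ)·‖θ‖, where ‖·‖ is the Euclidean norm on ℝ^d. -/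
open Matrix

/-- The Euclidean norm on `ℝ^d`. -/
noncomputable def enormEuclid {d : ℕ} (v : Fin d → ℝ) : ℝ :=
  Real.sqrt (∑ k : Fin d, v k ^ 2)

lemma aux_scalar (lmin lmax lam a b : ℝ) (h0 : 0 < lmin) (h1 : lmin ≤ lam) (h2 : lam ≤ lmax)
    (hb : 0 ≤ b) (hab1 : lmin * b ≤ a) (hab2 : a ≤ lmax * b) :
    (a - b * lam) ^ 2 ≤ ((lmax / lmin - 1) * a) ^ 2 := by
  have hmax : 0 < lmax := lt_of_lt_of_le h0 (h1.trans h2)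
  have ha : 0 ≤ a := le_trans (by positivity) hab1
  have f1 : 0 ≤ lmax * a - lmin * (b * lam) := by nlinarith
  have f2 : 0 ≤ (lmax - 2 * lmin) * a + lmin * (b * lam) := by
    rcases le_or_gt (2 * lmin) lmax with h | h
    · nlinarith
    · nlinarith [mul_nonneg hb (sq_nonneg (lmax - lmin))]
  have hkey : (a - b * lam) ^ 2 * lmin ^ 2 ≤ ((lmax - lmin) * a) ^ 2 := by
    nlinarith [mul_nonneg f1 f2]
  have heq : ((lmax / lmin - 1) * a) ^ 2 = ((lmax - lmin) * a) ^ 2 / lmin ^ 2 := by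
    field_simp
  rw [heq, le_div_iff₀ (by positivity)]
  linarith

lemma aux_repr {d : ℕ} {A : Matrix (Fin d) (Fin d) ℝ} (hA : A.IsHermitian)
    (x : EuclideanSpace ℝ (Fin d)) (i : Fin d) :
    hA.eigenvectorBasis.repr (Matrix.toEuclideanLin A x) i
      = hA.eigenvalues i * hA.eigenvectorBasis.repr x i := by
  have hS := (Matrix.isHermitian_iff_isSymmetric.1 hA)
  rw [hA.eigenvectorBasis.repr_apply_apply, hA.eigenvectorBasis.repr_apply_apply,
    ← hS (hA.eigenvectorBasis i) x]
  have h1 : Matrix.toEuclideanLin A (hA.eigenvectorBasis i)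
      = hA.eigenvalues i • hA.eigenvectorBasis i := by
    apply (WithLp.equiv 2 (Fin d → ℝ)).injective
    simpa [Matrix.toEuclideanLin_apply] using hA.mulVec_eigenvectorBasis i
  rw [h1, real_inner_smul_left]

lemma aux_inner_sum {d : ℕ} (b : OrthonormalBasis (Fin d) ℝ (EuclideanSpace ℝ (Fin d)))
    (x y : EuclideanSpace ℝ (Fin d)) :
    (inner ℝ x y : ℝ) = ∑ i, b.repr x i * b.repr y i := by
  rw [← b.repr.inner_map_map x y, PiLp.inner_apply]
  simp [RCLike.inner_apply, mul_comm]

lemma aux_dot {d : ℕ} (u v : Fin d → ℝ) :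
    u ⬝ᵥ v = (inner ℝ ((WithLp.equiv 2 (Fin d → ℝ)).symm u)
      ((WithLp.equiv 2 (Fin d → ℝ)).symm v) : ℝ) := by
  rw [PiLp.inner_apply]
  simp [dotProduct, RCLike.inner_apply, mul_comm]

/-- For a symmetric positive definite `A` with smallest eigenvalue `λmin > 0`, largest
eigenvalue `λmax`, and condition number `ρ = λmax/λmin`:
`‖(θᵀA²θ)θ − (θᵀAθ)Aθ‖ ≤ (ρ − 1)(θᵀA²θ)‖θ‖` for every `θ ∈ ℝ^d`. -/
theorem gg_S1_bound {d : ℕ} (hd : 1 ≤ d)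
    (A : Matrix (Fin d) (Fin d) ℝ) (hA : A.IsHermitian) (hPD : A.PosDef)
    (lmin lmax : ℝ)
    (hmin : IsLeast (Set.range hA.eigenvalues) lmin)
    (hmax : IsGreatest (Set.range hA.eigenvalues) lmax)
    (hlmin : 0 < lmin) (ρ : ℝ) (hρ : ρ = lmax / lmin) :
    ∀ θ : Fin d → ℝ,
      enormEuclid ((θ ⬝ᵥ ((A * A) *ᵥ θ)) • θ - (θ ⬝ᵥ (A *ᵥ θ)) • (A *ᵥ θ)) ≤
        (ρ - 1) * (θ ⬝ᵥ ((A * A) *ᵥ θ)) * enormEuclid θ := by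
  intro θ
  set B := hA.eigenvectorBasis with hB
  set lam := hA.eigenvalues with hlam
  have hle : ∀ i, lmin ≤ lam i := fun i => hmin.2 ⟨i, rfl⟩
  have hge : ∀ i, lam i ≤ lmax := fun i => hmax.2 ⟨i, rfl⟩
  obtain ⟨i0, hi0⟩ := hmin.1
  have hminmax : lmin ≤ lmax := hi0 ▸ hge i0
  set x : EuclideanSpace ℝ (Fin d) := (WithLp.equiv 2 (Fin d → ℝ)).symm θ with hx
  set c : Fin d → ℝ := fun i => B.repr x i with hc
  set T := Matrix.toEuclideanLin A with hT
  have hTx : T x = (WithLp.equiv 2 (Fin d → ℝ)).symm (A *ᵥ θ) := by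
    rw [hx, hT]; rfl
  have hTTx : T (T x) = (WithLp.equiv 2 (Fin d → ℝ)).symm ((A * A) *ᵥ θ) := by
    rw [hTx, hT, ← Matrix.mulVec_mulVec]; rfl
  have hrTx : ∀ i, B.repr (T x) i = lam i * c i := fun i => aux_repr hA x i
  have hrTTx : ∀ i, B.repr (T (T x)) i = lam i ^ 2 * c i := by
    intro i; rw [aux_repr hA (T x) i, hrTx i]; ring
  set a : ℝ := ∑ i, lam i ^ 2 * c i ^ 2 with ha
  set b : ℝ := ∑ i, lam i * c i ^ 2 with hb
  set t : ℝ := ∑ i, c i ^ 2 with ht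
  have hda : θ ⬝ᵥ ((A * A) *ᵥ θ) = a := by
    rw [aux_dot, ← hx, ← hTTx, aux_inner_sum B, ha]
    exact Finset.sum_congr rfl fun i _ => by rw [hrTTx i]; ring
  have hdb : θ ⬝ᵥ (A *ᵥ θ) = b := by
    rw [aux_dot, ← hx, ← hTx, aux_inner_sum B, hb]
    exact Finset.sum_congr rfl fun i _ => by rw [hrTx i]; ring
  have hnt : enormEuclid θ = Real.sqrt t := by
    unfold enormEuclid
    congr 1
    have h2 : ∑ k, θ k ^ 2 = θ ⬝ᵥ θ := by simp [dotProduct, sq]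
    rw [h2, aux_dot θ θ, ← hx, aux_inner_sum B x x, ht]
    exact Finset.sum_congr rfl fun i _ => (pow_two (B.repr x i)).symm
  -- scalar facts
  have hbnn : 0 ≤ b := Finset.sum_nonneg fun i _ => by
    have := (hlmin.trans_le (hle i)).le; positivity
  have hab1 : lmin * b ≤ a := by
    rw [hb, ha, Finset.mul_sum]
    refine Finset.sum_le_sum fun i _ => ?_
    have hpos := hlmin.trans_le (hle i)
    calc lmin * (lam i * c i ^ 2) ≤ lam i * (lam i * c i ^ 2) :=
          mul_le_mul_of_nonneg_right (hle i) (by positivity)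
      _ = lam i ^ 2 * c i ^ 2 := by ring
  have hab2 : a ≤ lmax * b := by
    rw [hb, ha, Finset.mul_sum]
    refine Finset.sum_le_sum fun i _ => ?_
    have hpos := hlmin.trans_le (hle i)
    calc lam i ^ 2 * c i ^ 2 = lam i * (lam i * c i ^ 2) := by ring
      _ ≤ lmax * (lam i * c i ^ 2) :=
          mul_le_mul_of_nonneg_right (hge i) (by positivity)
  have hann : 0 ≤ a := le_trans (by positivity) hab1
  have hρ1 : 0 ≤ ρ - 1 := by
    rw [hρ]; rw [le_sub_iff_add_le, zero_add, le_div_iff₀ hlmin, one_mul]; exact hminmax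
  -- the vector
  set w : EuclideanSpace ℝ (Fin d) := a • x - b • T x with hw
  have hwk : ∀ k, (a • θ - b • (A *ᵥ θ)) k = w k := by
    intro k
    rw [hw]
    simp only [Pi.sub_apply, Pi.smul_apply, smul_eq_mul, PiLp.sub_apply, PiLp.smul_apply]
    rw [hTx]
    rfl
  have hrw : ∀ i, B.repr w i = (a - b * lam i) * c i := by
    intro i
    have h3 : B.repr w = a • B.repr x - b • B.repr (T x) := by
      rw [hw, map_sub, _root_.map_smul, _root_.map_smul]
    rw [h3]
    simp only [PiLp.sub_apply, PiLp.smul_apply, smul_eq_mul]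
    rw [hrTx i]
    ring
  have hsum : ∑ k, (w k) ^ 2 = ∑ i, ((a - b * lam i) * c i) ^ 2 := by
    have h1 : ∑ k, (w k) ^ 2 = (inner ℝ w w : ℝ) := by
      rw [PiLp.inner_apply]; simp [RCLike.inner_apply, sq]
    rw [h1, aux_inner_sum B w w]
    exact Finset.sum_congr rfl fun i _ => by rw [hrw i]; ring
  have hbound : ∑ i, ((a - b * lam i) * c i) ^ 2 ≤ ((ρ - 1) * a) ^ 2 * t := by
    rw [ht, Finset.mul_sum]
    refine Finset.sum_le_sum fun i _ => ?_
    have hs := aux_scalar lmin lmax (lam i) a b hlmin (hle i) (hge i) hbnn hab1 hab2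
    rw [← hρ] at hs
    have := sq_nonneg (c i)
    calc ((a - b * lam i) * c i) ^ 2 = (a - b * lam i) ^ 2 * c i ^ 2 := by ring
      _ ≤ ((ρ - 1) * a) ^ 2 * c i ^ 2 := by nlinarith
  -- finish
  rw [hda, hdb, hnt]
  unfold enormEuclid
  have hl : (∑ k, ((a • θ - b • (A *ᵥ θ)) k) ^ 2) = ∑ k, (w k) ^ 2 :=
    Finset.sum_congr rfl fun k _ => by rw [hwk k]
  rw [hl]
  calc Real.sqrt (∑ k, (w k) ^ 2) ≤ Real.sqrt (((ρ - 1) * a) ^ 2 * t) := by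
        apply Real.sqrt_le_sqrt; rw [hsum]; exact hbound
    _ = (ρ - 1) * a * Real.sqrt t := by
        rw [Real.sqrt_mul (sq_nonneg _), Real.sqrt_sq (by positivity)]
end
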